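/- Let A₁,…,A_k be bounded operators on H. For every *-polynomial p in k operator variables, ‖p(A₁,…,A_k)‖ ≤ ‖p(Ψ⁺_{A₁},…,Ψ⁺_{A_k})‖. (This is the combined inequality 'ψ₊ majorizes ψ' which is the key step in the paper's new proof of Pimsner's theorem: it follows by transitivity from ψ₊ ≻ ψ̃ and ψ̃ ≻ ψ.) -/

import Mathlib

open ContinuousLinearMap
open scoped lp

/-- Evaluation of a word in formal letters `x i` (`b = false`) and `x i *` (`b = true`)
at the tuple of operators `T`. -/
noncomputable def evalWord {k : ℕ} {H : Type*} [NormedAddCommGroup H] [InnerProductSpace ℂ H]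
    [CompleteSpace H] (T : Fin k → H →L[ℂ] H) : List (Fin k × Bool) → H →L[ℂ] H
  | [] => 1
  | (i, b) :: w => (if b then adjoint (T i) else T i) * evalWord T w

/-- A *-polynomial in `k` operator variables is a finite ℂ-linear combination of words;
`evalPoly T p` is its evaluation at the operators `T 0, ..., T (k-1)`. -/
noncomputable def evalPoly {k : ℕ} {H : Type*} [NormedAddCommGroup H] [InnerProductSpace ℂ H]
    [CompleteSpace H] (T : Fin k → H →L[ℂ] H) (p : List (ℂ × List (Fin k × Bool))) : H →L[ℂ] H :=
  (p.map fun cw => cw.1 • evalWord T cw.2).sum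

/-- The degree of a *-polynomial: the maximal length of a word occurring in it. -/
def polyDegree {k : ℕ} (p : List (ℂ × List (Fin k × Bool))) : ℕ :=
  (p.map fun cw => cw.2.length).foldr max 0

/-!
A compressed shift `Ψ⁺_B` moves coordinate `n` to `n + 1` applying `B`, and its adjoint moves
`n + 1` back to `n` applying `B*`. Hence in coordinates `n ≥ |w|` a word `w` in the `Ψ⁺_{A_i}` acts
as the same word in the `A_i`, composed with a translation by the net shift of `w`. If `ξ`
equals `h` on a window of length `M + 2D`, where `D` bounds the degrees of the words of `p`, then
`p(Ψ⁺) ξ` equals `p(A) h` in `M` coordinates, so `M ‖p(A) h‖² ≤ (M + 2D) ‖p(Ψ⁺)‖² ‖h‖²`;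
let `M → ∞`.
-/

def wordShift {k : ℕ} : List (Fin k × Bool) → ℤ
  | [] => 0
  | (_, false) :: w => 1 + wordShift w
  | (_, true) :: w => -1 + wordShift w

lemma abs_wordShift_le {k : ℕ} (w : List (Fin k × Bool)) : |wordShift w| ≤ w.length := by
  induction w with
  | nil => simp [wordShift]
  | cons l w ih =>
    obtain ⟨_, b⟩ := l
    rw [abs_le] at ih ⊢
    cases b <;> simp only [wordShift, List.length_cons] <;> push_cast <;> omega

lemma polyDegree_cons {k : ℕ} (cw : ℂ × List (Fin k × Bool))
    (p : List (ℂ × List (Fin k × Bool))) : polyDegree (cw :: p) = max cw.2.length (polyDegree p) :=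
  rfl

lemma le_of_forall_natCast_mul_le_add_mul {a c d : ℝ} (h : ∀ M : ℕ, M * a ≤ (M + d) * c) :
    a ≤ c := by
  by_contra! hca
  obtain ⟨M, hM⟩ := exists_nat_gt (d * c / (a - c))
  rw [div_lt_iff₀ (sub_pos.mpr hca)] at hM
  linarith [h M]

section

variable {H : Type*} [NormedAddCommGroup H]

noncomputable def constOnIco (a b : ℤ) (h : H) : ℓ²(ℤ, H) :=
  ∑ m ∈ Finset.Ico a b, lp.single 2 m h

lemma constOnIco_apply_of_mem {a b m : ℤ} (hm : m ∈ Finset.Ico a b) (h : H) :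
    constOnIco a b h m = h := by
  rw [constOnIco, lp.coeFn_sum, Finset.sum_apply]
  simp only [lp.coeFn_single, Finset.sum_pi_single, if_pos hm]

lemma norm_constOnIco_sq (a b : ℤ) (h : H) :
    ‖constOnIco a b h‖ ^ 2 = (b - a).toNat * ‖h‖ ^ 2 := by
  have := lp.norm_sum_single (p := 2) (by norm_num) (fun _ : ℤ => h) (Finset.Ico a b)
  simp only [ENNReal.toReal_ofNat, Real.rpow_two, Finset.sum_const, Int.card_Ico,
    nsmul_eq_mul] at this
  exact this

variable [InnerProductSpace ℂ H]

def IsCompressedShift (B : H →L[ℂ] H) (T : ℓ²(ℤ, H) →L[ℂ] ℓ²(ℤ, H)) : Prop :=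
  ∀ ξ n, T ξ n = if 0 < n then B (ξ (n - 1)) else 0

lemma IsCompressedShift.apply_single {B : H →L[ℂ] H} {T : ℓ²(ℤ, H) →L[ℂ] ℓ²(ℤ, H)}
    (hT : IsCompressedShift B T) {n : ℤ} (hn : 0 ≤ n) (v : H) :
    T (lp.single 2 n v) = lp.single 2 (n + 1) (B v) := by
  ext m
  rw [hT, lp.single_apply, lp.single_apply]
  split_ifs with hm
  · rcases eq_or_ne m (n + 1) with rfl | hne
    · simp
    · rw [Pi.single_eq_of_ne (by omega), Pi.single_eq_of_ne hne, map_zero]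
  · rw [Pi.single_eq_of_ne (by omega)]

variable [CompleteSpace H] {k : ℕ}

lemma evalPoly_cons (T : Fin k → H →L[ℂ] H) (cw : ℂ × List (Fin k × Bool))
    (p : List (ℂ × List (Fin k × Bool))) :
    evalPoly T (cw :: p) = cw.1 • evalWord T cw.2 + evalPoly T p := by
  simp [evalPoly]

lemma evalWord_cons_false_apply (T : Fin k → H →L[ℂ] H) (i : Fin k) (w : List (Fin k × Bool))
    (x : H) : evalWord T ((i, false) :: w) x = T i (evalWord T w x) :=
  rfl

lemma evalWord_cons_true_apply (T : Fin k → H →L[ℂ] H) (i : Fin k) (w : List (Fin k × Bool))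
    (x : H) : evalWord T ((i, true) :: w) x = adjoint (T i) (evalWord T w x) :=
  rfl

lemma IsCompressedShift.adjoint_apply {B : H →L[ℂ] H} {T : ℓ²(ℤ, H) →L[ℂ] ℓ²(ℤ, H)}
    (hT : IsCompressedShift B T) (ξ : ℓ²(ℤ, H)) {n : ℤ} (hn : 0 ≤ n) :
    adjoint T ξ n = adjoint B (ξ (n + 1)) := by
  refine ext_inner_right ℂ fun v => ?_
  rw [← lp.inner_single_right, adjoint_inner_left, hT.apply_single hn, lp.inner_single_right,
    adjoint_inner_left]

variable {A : Fin k → H →L[ℂ] H} {T : Fin k → ℓ²(ℤ, H) →L[ℂ] ℓ²(ℤ, H)}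

lemma evalWord_apply_of_isCompressedShift (hT : ∀ i, IsCompressedShift (A i) (T i))
    (w : List (Fin k × Bool)) (ξ : ℓ²(ℤ, H)) {n : ℤ} (hn : w.length ≤ n) :
    evalWord T w ξ n = evalWord A w (ξ (n - wordShift w)) := by
  induction w generalizing n with
  | nil => simp [evalWord, wordShift]
  | cons l w ih =>
    obtain ⟨i, b⟩ := l
    simp only [List.length_cons] at hn
    push_cast at hn
    cases b
    · rw [evalWord_cons_false_apply, evalWord_cons_false_apply, hT i, if_pos (by omega),
        ih (by omega), wordShift, sub_add_eq_sub_sub]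
    · rw [evalWord_cons_true_apply, evalWord_cons_true_apply, (hT i).adjoint_apply _ (by omega),
        ih (by omega), wordShift, sub_add_eq_sub_sub, sub_neg_eq_add]

lemma evalPoly_apply_of_isCompressedShift (hT : ∀ i, IsCompressedShift (A i) (T i))
    {p : List (ℂ × List (Fin k × Bool))} {D : ℕ} (hp : polyDegree p ≤ D) (ξ : ℓ²(ℤ, H)) (h : H)
    {n : ℤ} (hn : D ≤ n) (hξ : ∀ m, |m - n| ≤ D → ξ m = h) :
    evalPoly T p ξ n = evalPoly A p h := by
  induction p with
  | nil => simp [evalPoly]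
  | cons cw p ih =>
    rw [polyDegree_cons, max_le_iff] at hp
    have hw : (cw.2.length : ℤ) ≤ D := by exact_mod_cast hp.1
    have hshift := abs_wordShift_le cw.2
    rw [evalPoly_cons, evalPoly_cons, add_apply, lp.coeFn_add, Pi.add_apply, ih hp.2, smul_apply,
      lp.coeFn_smul, Pi.smul_apply, evalWord_apply_of_isCompressedShift hT _ _ (by omega),
      hξ _ (by rw [abs_le] at hshift ⊢; omega), add_apply, smul_apply]

lemma natCast_mul_norm_evalPoly_apply_sq_le (hT : ∀ i, IsCompressedShift (A i) (T i))
    {p : List (ℂ × List (Fin k × Bool))} {D : ℕ} (hp : polyDegree p ≤ D) (h : H) (M : ℕ) :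
    M * ‖evalPoly A p h‖ ^ 2 ≤ (M + 2 * D) * (‖evalPoly T p‖ * ‖h‖) ^ 2 := by
  set ξ := constOnIco 0 ((M + 2 * D : ℕ) : ℤ) h
  have hcoord : ∀ n ∈ Finset.Ico (D : ℤ) (D + M), evalPoly T p ξ n = evalPoly A p h := by
    intro n hn
    rw [Finset.mem_Ico] at hn
    refine evalPoly_apply_of_isCompressedShift hT hp ξ h hn.1 fun m hm => ?_
    rw [abs_le] at hm
    exact constOnIco_apply_of_mem (by rw [Finset.mem_Ico]; omega) h
  have hξ : ‖ξ‖ ^ 2 = (M + 2 * D) * ‖h‖ ^ 2 := by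
    rw [norm_constOnIco_sq, sub_zero, Int.toNat_natCast]
    push_cast
    ring
  calc (M : ℝ) * ‖evalPoly A p h‖ ^ 2
      = ∑ n ∈ Finset.Ico (D : ℤ) (D + M), ‖evalPoly T p ξ n‖ ^ 2 := by
        rw [Finset.sum_congr rfl fun n hn => by rw [hcoord n hn], Finset.sum_const, Int.card_Ico,
          nsmul_eq_mul]
        simp
    _ ≤ ‖evalPoly T p ξ‖ ^ 2 := by
        simpa using lp.sum_rpow_le_norm_rpow (p := 2) (by norm_num) (evalPoly T p ξ) _
    _ ≤ (‖evalPoly T p‖ * ‖ξ‖) ^ 2 := by gcongr; exact le_opNorm _ _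
    _ = (M + 2 * D) * (‖evalPoly T p‖ * ‖h‖) ^ 2 := by rw [mul_pow, hξ]; ring

theorem norm_evalPoly_le_of_isCompressedShift (hT : ∀ i, IsCompressedShift (A i) (T i))
    (p : List (ℂ × List (Fin k × Bool))) : ‖evalPoly A p‖ ≤ ‖evalPoly T p‖ := by
  refine opNorm_le_bound _ (norm_nonneg _) fun h => ?_
  have hsq : ‖evalPoly A p h‖ ^ 2 ≤ (‖evalPoly T p‖ * ‖h‖) ^ 2 :=
    le_of_forall_natCast_mul_le_add_mul
      (natCast_mul_norm_evalPoly_apply_sq_le hT le_rfl h)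
  exact (pow_le_pow_iff_left₀ (norm_nonneg _) (by positivity) two_ne_zero).mp hsq

end

lemma isCompressedShift_compression {H : Type*} [NormedAddCommGroup H] [InnerProductSpace ℂ H]
    {P : ℓ²(ℤ, H) →L[ℂ] ℓ²(ℤ, H)} (hP : ∀ ξ n, P ξ n = if 0 ≤ n then ξ n else 0)
    {Ψ : (H →L[ℂ] H) → ℓ²(ℤ, H) →L[ℂ] ℓ²(ℤ, H)} (hΨ : ∀ B ξ n, Ψ B ξ n = B (ξ (n - 1)))
    (B : H →L[ℂ] H) : IsCompressedShift B (P * Ψ B * P) := by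
  intro ξ n
  rw [mul_apply_eq_comp, mul_apply_eq_comp, hP, hΨ, hP]
  split_ifs <;> first | rfl | exact map_zero B | omega

/-- For bounded operators `A₁,…,A_k` on `H` and every *-polynomial `p`,
`‖p(A₁,…,A_k)‖ ≤ ‖p(Ψ⁺_{A₁},…,Ψ⁺_{A_k})‖`, where `(Ψ_A ξ)(n) = A(ξ(n−1))` on `ℓ²(ℤ,H)`,
`Ψ⁺_A = P₊ Ψ_A P₊`, and `P₊` projects onto `{ξ : ξ(n) = 0 for n < 0}`. -/
theorem stmt4 {H : Type} [NormedAddCommGroup H] [InnerProductSpace ℂ H] [CompleteSpace H]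
    {k : ℕ} (A : Fin k → H →L[ℂ] H)
    (Pplus : lp (fun _ : ℤ => H) 2 →L[ℂ] lp (fun _ : ℤ => H) 2)
    (hP : ∀ (ξ : lp (fun _ : ℤ => H) 2) (n : ℤ), (Pplus ξ) n = if 0 ≤ n then ξ n else 0)
    (Ψ : (H →L[ℂ] H) → lp (fun _ : ℤ => H) 2 →L[ℂ] lp (fun _ : ℤ => H) 2)
    (hΨ : ∀ (B : H →L[ℂ] H) (ξ : lp (fun _ : ℤ => H) 2) (n : ℤ), (Ψ B ξ) n = B (ξ (n - 1)))
    (p : List (ℂ × List (Fin k × Bool))) :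
    ‖evalPoly A p‖ ≤ ‖evalPoly (fun i => Pplus * Ψ (A i) * Pplus) p‖ :=
  norm_evalPoly_le_of_isCompressedShift (fun i => isCompressedShift_compression hP hΨ (A i)) p
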